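/- arXiv:2502.04422 — 3 statements merged into one kernel-verified Lean document; each statement's English description precedes it below -/
import Mathlib

section
/- Let n ≥ 1 and let c_1, …, c_n be complex numbers, not all equal. Suppose the list c_1, …, c_n contains exactly l distinct values that occur more than once, and the total number of indices i whose value c_i occurs more than once is m (so ∑ of the multiplicities of the repeated values equals m, with m ≤ n). Define h(θ) = ∑_{i=1}^n ∏_{j≠i} (θ + c_j) and k(θ) = ∏_{i=1}^n (θ + c_i). Then the number of roots of h, counted with multiplicity, that are not roots of k is exactly n + l - m - 1. -/
open Polynomial
open scoped Classical

/-- ML-degree theorem: if among `c 1, …, c n` (not all equal) there are exactly `l`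
distinct values occurring more than once, whose multiplicities sum to `m`, then the
number of roots of `h`, counted with multiplicity, that are not roots of `k`, is
`n + l - m - 1`. -/
theorem fgm_ml_degree (n : ℕ) (hn : 1 ≤ n) (c : Fin n → ℂ)
    (hnotall : ∃ i j : Fin n, c i ≠ c j)
    (l m : ℕ)
    (hl : ((Finset.univ.image c).filter
        (fun a => 1 < (Finset.univ.filter (fun i : Fin n => c i = a)).card)).card = l)
    (hm : ∑ a ∈ (Finset.univ.image c).filter
        (fun a => 1 < (Finset.univ.filter (fun i : Fin n => c i = a)).card),
        (Finset.univ.filter (fun i : Fin n => c i = a)).card = m) :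
    (Multiset.filter
        (fun α => (∏ i : Fin n, (X + C (c i))).eval α ≠ 0)
        (∑ i : Fin n, ∏ j ∈ Finset.univ.erase i, (X + C (c j))).roots).card
      = n + l - m - 1 := by
  classical
  set k : ℂ[X] := ∏ i : Fin n, (X + C (c i)) with hk
  set h : ℂ[X] := ∑ i : Fin n, ∏ j ∈ Finset.univ.erase i, (X + C (c j)) with hh
  set s : Multiset ℂ := Finset.univ.val.map (fun i : Fin n => -c i) with hs
  have hkprod : k = (s.map fun a => X - C a).prod := by
    rw [hk, hs, Multiset.map_map, Finset.prod_eq_multiset_prod]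
    congr 1
    apply Multiset.map_congr rfl
    intro i _
    simp [sub_neg_eq_add]
  have hkroots : k.roots = s := by rw [hkprod, roots_multiset_prod_X_sub_C]
  have hscard : Multiset.card s = n := by simp [hs]
  have hknd : k.natDegree = n := by
    rw [hkprod, natDegree_multiset_prod_X_sub_C_eq_card, hscard]
  have hkmonic : k.Monic := monic_prod_of_monic _ _ fun i _ => monic_X_add_C _
  have hk0 : k ≠ 0 := hkmonic.ne_zero
  -- h is the derivative of k
  have hder : derivative k = h := by
    rw [hk, Finset.prod_eq_multiset_prod, derivative_prod, hh,
      Finset.sum_eq_multiset_sum]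
    congr 1
    apply Multiset.map_congr rfl
    intro i _
    rw [derivative_X_add_C, mul_one, Finset.prod_eq_multiset_prod, Finset.erase_val]
  have hne : h ≠ 0 := by
    intro h0
    have : k.natDegree = 0 := natDegree_eq_zero_of_derivative_eq_zero (by rw [hder, h0])
    omega
  have hndh : h.natDegree = n - 1 := by
    refine le_antisymm ?_ (le_natDegree_of_ne_zero ?_)
    · have := natDegree_derivative_le k
      rw [hder, hknd] at this
      exact this
    · rw [← hder, coeff_derivative, Nat.sub_add_cancel hn, ← hknd,
        hkmonic.coeff_natDegree, hknd, one_mul]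
      intro hcon
      have : (n - 1 + 1 : ℕ) = 0 := by exact_mod_cast hcon
      omega
  have hcardroots : h.roots.card = n - 1 := by
    rw [← hndh]
    exact splits_iff_card_roots.mp (IsAlgClosed.splits h)
  -- membership in s means root of k
  have hmems : ∀ a : ℂ, a ∈ s ↔ k.eval a = 0 := by
    intro a
    rw [← hkroots, mem_roots hk0]
    exact Iff.rfl
  -- the count of roots of h that ARE roots of k
  set q : ℂ → Prop := fun α => k.eval α = 0 with hq
  have hSsum : (h.roots.filter q).card = ∑ a ∈ s.toFinset, (s.count a - 1) := by
    rw [← Multiset.toFinset_sum_count_eq]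
    rw [Finset.sum_subset (fun a ha => ?_) (fun a ha hna => ?_)]
    · refine Finset.sum_congr rfl fun a ha => ?_
      have hroot : k.eval a = 0 := (hmems a).mp (Multiset.mem_toFinset.mp ha)
      rw [Multiset.count_filter, if_pos hroot, count_roots, ← hder,
        derivative_rootMultiplicity_of_root hroot, ← count_roots, hkroots]
    · rw [Multiset.mem_toFinset] at ha
      rw [Multiset.mem_toFinset, hmems]
      exact (Multiset.mem_filter.mp ha).2
    · rw [Multiset.count_eq_zero]
      intro hmem
      exact hna (Multiset.mem_toFinset.mpr hmem)
  have hS : (h.roots.filter q).card + s.toFinset.card = n := by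
    rw [hSsum, Finset.card_eq_sum_ones, ← Finset.sum_add_distrib, ← hscard,
      ← Multiset.toFinset_sum_count_eq]
    refine Finset.sum_congr rfl fun a ha => ?_
    have : 1 ≤ s.count a := Multiset.one_le_count_iff_mem.mpr (Multiset.mem_toFinset.mp ha)
    omega
  have hd : s.toFinset.card = (Finset.univ.image c).card := by
    rw [hs, Multiset.toFinset_map, Finset.val_toFinset]
    have hcomp : (fun i : Fin n => -c i) = (Neg.neg ∘ c) := rfl
    rw [hcomp, ← Finset.image_image, Finset.card_image_of_injective _ neg_injective]
  -- combinatorics: n + l = m + d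
  have hcomb : n + l = m + (Finset.univ.image c).card := by
    set P : ℂ → Prop := fun a => 1 < (Finset.univ.filter (fun i : Fin n => c i = a)).card
      with hP
    have h1 : (Finset.univ : Finset (Fin n)).card
        = ∑ a ∈ Finset.univ.image c, (Finset.univ.filter fun i => c i = a).card :=
      Finset.card_eq_sum_card_image c Finset.univ
    rw [Finset.card_univ, Fintype.card_fin,
      ← Finset.sum_filter_add_sum_filter_not (Finset.univ.image c) P] at h1
    have h2 : ∑ a ∈ (Finset.univ.image c).filter (fun a => ¬ P a),
        (Finset.univ.filter fun i => c i = a).card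
        = ((Finset.univ.image c).filter (fun a => ¬ P a)).card := by
      rw [Finset.card_eq_sum_ones]
      refine Finset.sum_congr rfl fun a ha => ?_
      obtain ⟨haim, hnP⟩ := Finset.mem_filter.mp ha
      obtain ⟨i, _, rfl⟩ := Finset.mem_image.mp haim
      have hpos : 0 < (Finset.univ.filter fun j => c j = c i).card :=
        Finset.card_pos.mpr ⟨i, by simp⟩
      rw [hP] at hnP
      omega
    have h3 := Finset.card_filter_add_card_filter_not
      (s := Finset.univ.image c) (p := P)
    rw [hm, h2] at h1
    rw [hl] at h3
    omega
  -- combine everything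
  have htot : (Multiset.filter (fun α => k.eval α ≠ 0) h.roots).card
      + (h.roots.filter q).card = n - 1 := by
    have htt := congrArg Multiset.card
      (Multiset.filter_add_not (fun α => k.eval α ≠ 0) h.roots)
    rw [Multiset.card_add] at htt
    have he : Multiset.filter (fun a => ¬ eval a k ≠ 0) h.roots
        = Multiset.filter q h.roots := by
      apply Multiset.filter_congr
      intro a _
      simp [hq]
    rw [he, hcardroots] at htt
    exact htt
  rw [hd] at hS
  omega
end

section
/- Let n ≥ 1 and let c_1, …, c_n be pairwise distinct complex numbers, and define h(θ) = ∑_{i=1}^n ∏_{j≠i} (θ + c_j) and k(θ) = ∏_{i=1}^n (θ + c_i). Then h and k have no common zero, and the number of roots of h counted with multiplicity that are not roots of k is exactly n - 1. -/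
open Polynomial
open scoped Classical

/-- If the `c i` are pairwise distinct, `h` and `k` have no common zero and the
number of roots of `h` counted with multiplicity that are not roots of `k` is `n - 1`. -/
theorem fgm_ml_degree_distinct (n : ℕ) (hn : 1 ≤ n) (c : Fin n → ℂ)
    (hinj : Function.Injective c) :
    (¬ ∃ α : ℂ,
        (∑ i : Fin n, ∏ j ∈ Finset.univ.erase i, (X + C (c j))).eval α = 0 ∧
        (∏ i : Fin n, (X + C (c i))).eval α = 0) ∧
    (Multiset.filter
        (fun α => (∏ i : Fin n, (X + C (c i))).eval α ≠ 0)
        (∑ i : Fin n, ∏ j ∈ Finset.univ.erase i, (X + C (c j))).roots).card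
      = n - 1 := by
  set h : ℂ[X] := ∑ i : Fin n, ∏ j ∈ Finset.univ.erase i, (X + C (c j)) with hh
  set k : ℂ[X] := ∏ i : Fin n, (X + C (c i)) with hk
  -- no common zero
  have hno : ∀ α : ℂ, k.eval α = 0 → h.eval α ≠ 0 := by
    intro α hkα
    rw [hk, eval_prod, Finset.prod_eq_zero_iff] at hkα
    obtain ⟨i0, -, hi0⟩ := hkα
    simp only [eval_add, eval_X, eval_C] at hi0
    have hα : α = -c i0 := eq_neg_of_add_eq_zero_left hi0
    rw [hh, eval_finset_sum]
    rw [Finset.sum_eq_single i0]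
    · rw [eval_prod]
      apply Finset.prod_ne_zero_iff.2
      intro j hj
      simp only [eval_add, eval_X, eval_C, hα]
      intro habs
      exact (Finset.mem_erase.1 hj).1 (hinj (by linear_combination habs))
    · intro b _ hb
      rw [eval_prod]
      apply Finset.prod_eq_zero (Finset.mem_erase.2 ⟨Ne.symm hb, Finset.mem_univ i0⟩)
      simp [hα]
    · simp
  have hkdeg : k.natDegree = n := by
    rw [hk, natDegree_prod _ _ (fun i _ => (monic_X_add_C (c i)).ne_zero)]
    simp
  have hder : derivative k = h := by
    rw [hk, hh, Finset.prod_eq_multiset_prod, derivative_prod, Finset.sum_eq_multiset_sum]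
    apply congrArg Multiset.sum
    apply Multiset.map_congr rfl
    intro i _
    rw [derivative_add, derivative_X, derivative_C, add_zero, mul_one,
      Finset.prod_eq_multiset_prod, Finset.erase_val]
  have hne : h ≠ 0 := by
    intro habs
    have : k.eval (-c ⟨0, hn⟩) = 0 := by
      rw [hk, eval_prod]
      exact Finset.prod_eq_zero (Finset.mem_univ ⟨0, hn⟩) (by simp)
    exact hno _ this (by simp [habs])
  have hdeg : h.degree = (n - 1 : ℕ) := by
    rw [← hder, degree_derivative_eq k (by omega), hkdeg]
  constructor
  · rintro ⟨α, h1, h2⟩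
    exact hno α h2 h1
  · have hfilter : (Multiset.filter (fun α => k.eval α ≠ 0) h.roots) = h.roots := by
      apply Multiset.filter_eq_self.2
      intro α hα
      intro habs
      exact hno α habs ((mem_roots hne).1 hα)
    rw [hfilter, splits_iff_card_roots.1 (IsAlgClosed.splits h)]
    exact natDegree_eq_of_degree_eq_some hdeg
end

section
/- Let n ≥ 1 and let c_1, …, c_n be complex numbers. Suppose every value occurring among c_1, …, c_n occurs at least twice, and the c_i are not all equal. Then the polynomial h(θ) = ∑_{i=1}^n ∏_{j≠i} (θ + c_j) has at least one root α ∈ ℂ that is not a root of k(θ) = ∏_{i=1}^n (θ + c_i); equivalently, the maximum likelihood degree n + l - m - 1 (where l is the number of distinct values and m = n) is at least 1. -/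
open Polynomial
open scoped Classical

/-!
`h` is the derivative of `k`. A root of `k` of multiplicity `m` is a root of `k'` of
multiplicity `m - 1`, so, counted with multiplicity, exactly `n - l` of the `n - 1` roots of `k'`
are roots of `k`, where `l` is the number of distinct roots of `k`. The remaining `l - 1` roots
of `h` are not roots of `k`, and `l ≥ 2` because the `c i` are not all equal.
-/

namespace Polynomial

theorem roots_derivative_filter_isRoot {R : Type*} [CommRing R] [IsDomain R] [CharZero R]
    (p : R[X]) : p.derivative.roots.filter p.IsRoot = p.roots - p.roots.dedup := by
  ext a
  rw [Multiset.count_filter, Multiset.count_sub, Multiset.count_dedup, count_roots, count_roots]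
  split_ifs with hroot hmem hmem
  · exact derivative_rootMultiplicity_of_root hroot
  · have hp : p = 0 := by_contra fun hp => hmem ((mem_roots hp).2 hroot)
    simp [hp]
  · exact absurd (isRoot_of_mem_roots hmem) hroot
  · simp [rootMultiplicity_eq_zero hroot]

/-- The truncated subtraction is harmless: for constant `p` both sides are `0`. -/
theorem card_roots_derivative_filter_not_isRoot {K : Type*} [Field K] [IsAlgClosed K]
    [CharZero K] (p : K[X]) :
    (p.derivative.roots.filter fun a => ¬ p.IsRoot a).card = p.roots.toFinset.card - 1 := by
  have hsplit := Multiset.filter_add_not p.IsRoot p.derivative.roots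
  apply_fun Multiset.card at hsplit
  rw [Multiset.card_add, roots_derivative_filter_isRoot, Multiset.card_sub (Multiset.dedup_le _),
    IsAlgClosed.card_roots_eq_natDegree (p := p),
    IsAlgClosed.card_roots_eq_natDegree (p := p.derivative), natDegree_derivative] at hsplit
  have hdistinct : p.roots.toFinset.card ≤ p.roots.card := Multiset.toFinset_card_le _
  have hpos : 0 < p.roots.card → 0 < p.roots.toFinset.card := fun h =>
    Finset.card_pos.2 (Multiset.toFinset_nonempty.2 (Multiset.card_pos.1 h))
  rw [IsAlgClosed.card_roots_eq_natDegree] at hdistinct hpos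
  rw [← Multiset.card_toFinset] at hsplit
  omega

theorem roots_prod_X_add_C {R : Type*} [CommRing R] [IsDomain R] {ι : Type*} (s : Finset ι)
    (c : ι → R) : (∏ i ∈ s, (X + C (c i))).roots = s.val.map fun i => -c i := by
  simpa [sub_eq_add_neg, Multiset.map_map, Function.comp_def] using
    roots_multiset_prod_X_sub_C (s.val.map fun i => -c i)

end Polynomial

theorem fgm_ml_degree_pos_general (n : ℕ) (c : Fin n → ℂ)
    (hnotall : ∃ i j : Fin n, c i ≠ c j) :
    (∃ α : ℂ,
        (∑ i : Fin n, ∏ j ∈ Finset.univ.erase i, (X + C (c j))).eval α = 0 ∧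
        (∏ i : Fin n, (X + C (c i))).eval α ≠ 0) ∧
    1 ≤ (Multiset.filter
        (fun α => (∏ i : Fin n, (X + C (c i))).eval α ≠ 0)
        (∑ i : Fin n, ∏ j ∈ Finset.univ.erase i, (X + C (c j))).roots).card := by
  set k : ℂ[X] := ∏ i : Fin n, (X + C (c i))
  have hderiv : ∑ i : Fin n, ∏ j ∈ Finset.univ.erase i, (X + C (c j)) = derivative k := by
    simp [k, derivative_prod_finset]
  obtain ⟨i, j, hij⟩ := hnotall
  have htwo_roots : 1 < k.roots.toFinset.card := by
    refine Finset.one_lt_card.2 ⟨-c i, ?_, -c j, ?_, by simpa using hij⟩ <;>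
      simp [k, roots_prod_X_add_C]
  have hcard : 1 ≤ ((derivative k).roots.filter fun a => ¬ k.IsRoot a).card := by
    rw [card_roots_derivative_filter_not_isRoot]
    omega
  rw [hderiv]
  refine ⟨?_, hcard⟩
  obtain ⟨α, hα⟩ := Multiset.card_pos_iff_exists_mem.1 hcard
  rw [Multiset.mem_filter] at hα
  exact ⟨α, isRoot_of_mem_roots hα.1, hα.2⟩

/-- If every value among the `c i` occurs at least twice and the `c i` are not all
equal, then `h` has a root which is not a root of `k`; equivalently, the ML-degree
is at least `1`. -/
theorem fgm_ml_degree_pos (n : ℕ) (hn : 1 ≤ n) (c : Fin n → ℂ)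
    (hrep : ∀ i : Fin n, ∃ j : Fin n, j ≠ i ∧ c j = c i)
    (hnotall : ∃ i j : Fin n, c i ≠ c j) :
    (∃ α : ℂ,
        (∑ i : Fin n, ∏ j ∈ Finset.univ.erase i, (X + C (c j))).eval α = 0 ∧
        (∏ i : Fin n, (X + C (c i))).eval α ≠ 0) ∧
    1 ≤ (Multiset.filter
        (fun α => (∏ i : Fin n, (X + C (c i))).eval α ≠ 0)
        (∑ i : Fin n, ∏ j ∈ Finset.univ.erase i, (X + C (c j))).roots).card :=
  fgm_ml_degree_pos_general n c hnotall
end
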